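/- arXiv:1803.07689 — 3 statements merged into one kernel-verified Lean document; each statement's English description precedes it below -/
import Mathlib

section
/- Let ε(N), ε(N-1), …, ε(1) be positive reals. For a vector x ∈ [0,∞]^N with exactly m infinite components (0 ≤ m ≤ N-1), define T(m,x) = x_(N)/ε(N) + Σ_{i=1}^{N-m-1} (x_(N-i) - x_(N-i+1))/ε(N-i), where x_(j) denotes the j-th largest component. Consider the deterministic dynamics in which, at each regular time t, every component i with x_i(t) > 0 (including infinite components) decreases at rate ε(|M(t)|) where M(t) = {i : x_i(t) > 0}, and components that hit 0 stay at 0. Then all finite components of x(t) reach 0 exactly at time T(m, x(0)), i.e., T(m,x(0)) = inf{t : x_i(t) = 0 for all finite components i}. -/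
open scoped Classical

/-- The `j`-th smallest value (0-indexed) of the finite vector `x`, and `0` out of range. -/
noncomputable def sortedAsc {n : ℕ} (x : Fin n → ℝ) : ℕ → ℝ :=
  fun j => if h : j < n then (x ∘ Tuple.sort x) ⟨j, h⟩ else 0

/-- The draining time `T(m,x)` of Proposition 3.1, expressed via the finite components
of `x` sorted ascendingly: `T(m,x) = x₍N₎/ε(N) + ∑_{i=1}^{N-m-1} (x₍N-i₎-x₍N-i+1₎)/ε(N-i)`. -/
noncomputable def drainTime (N m : ℕ) (ε : ℕ → ℝ) {n : ℕ} (x : Fin n → ℝ) : ℝ :=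
  sortedAsc x 0 / ε N +
    ∑ i ∈ Finset.range (n - 1), (sortedAsc x (i + 1) - sortedAsc x i) / ε (N - 1 - i)

/-!
While two components are positive they have the same right derivative, so the gap between them
is frozen until the lower one is absorbed. Hence, if `i` has the largest initial value and
`D t = x 0 i - x t i` is the amount drained from it, every component equals
`max (x 0 j - D t) 0`: all of them vanish exactly when `x · i` does, and the number of positive
components is the number of initial values above `D t`. So `D` climbs at speed `ε (N - k)`
between the `k`-th and the `(k + 1)`-st smallest initial value (with `0` in front), and the time
it needs to reach the top is the telescoping sum `drainTime`.
-/

open Set Finset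

theorem sub_eq_sub_of_hasDerivWithinAt_Ici {f g f' : ℝ → ℝ} {a b : ℝ} (hab : a ≤ b)
    (hf : ContinuousOn f (Icc a b)) (hg : ContinuousOn g (Icc a b))
    (hf' : ∀ t ∈ Ico a b, HasDerivWithinAt f (f' t) (Ici t) t)
    (hg' : ∀ t ∈ Ico a b, HasDerivWithinAt g (f' t) (Ici t) t) :
    f b - g b = f a - g a :=
  constant_of_has_deriv_right_zero (hf.sub hg)
    (fun t ht => by simpa only [sub_self] using (hf' t ht).sub (hg' t ht)) b
    (right_mem_Icc.2 hab)

-- `0` when `p` never holds on `[0, ∞)`, since `sInf ∅ = 0`.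
noncomputable def firstTime (p : ℝ → Prop) : ℝ :=
  sInf {t | 0 ≤ t ∧ p t}

section firstTime

variable {p q : ℝ → Prop} {t : ℝ}

theorem firstTime_nonneg : 0 ≤ firstTime p :=
  Real.sInf_nonneg fun _ h => h.1

theorem firstTime_le (ht : 0 ≤ t) (hp : p t) : firstTime p ≤ t :=
  csInf_le ⟨0, fun _ h => h.1⟩ ⟨ht, hp⟩

theorem not_of_lt_firstTime (ht : 0 ≤ t) (h : t < firstTime p) : ¬p t :=
  fun hp => (firstTime_le ht hp).not_gt h

theorem firstTime_eq_zero (hp : p 0) : firstTime p = 0 :=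
  (firstTime_le le_rfl hp).antisymm firstTime_nonneg

theorem firstTime_spec (hp : IsClosed {t | p t}) (h : ∃ t, 0 ≤ t ∧ p t) : p (firstTime p) :=
  ((isClosed_Ici.inter hp).csInf_mem h ⟨0, fun _ h => h.1⟩).2

theorem firstTime_congr (h : ∀ t, 0 ≤ t → (p t ↔ q t)) : firstTime p = firstTime q := by
  unfold firstTime
  congr 1
  ext t
  exact and_congr_right (h t)

end firstTime

section crossing

variable {D : ℝ → ℝ}

theorem apply_firstTime_le_eq (hD : Continuous D) {a : ℝ} (h0 : D 0 ≤ a)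
    (hreach : ∃ t, 0 ≤ t ∧ a ≤ D t) : D (firstTime (a ≤ D ·)) = a := by
  have hle : a ≤ D (firstTime (a ≤ D ·)) := firstTime_spec (isClosed_le continuous_const hD) hreach
  obtain ⟨u, hu, hDu⟩ := intermediate_value_Icc firstTime_nonneg hD.continuousOn ⟨h0, hle⟩
  rwa [(firstTime_le hu.1 hDu.ge).antisymm hu.2]

theorem firstTime_le_eq_sum {L r : ℕ → ℝ} {K : ℕ} (hD : Continuous D)
    (hDmono : MonotoneOn D (Ici 0)) (hL : MonotoneOn L (Set.Iic K)) (hD0 : D 0 = L 0)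
    (hreach : ∃ t, 0 ≤ t ∧ L K ≤ D t) (hr : ∀ k < K, r k ≠ 0)
    (hderiv : ∀ t, 0 ≤ t → ∀ k < K, L k ≤ D t → D t < L (k + 1) →
      HasDerivWithinAt D (r k) (Ici t) t) :
    firstTime (L K ≤ D ·) = ∑ k ∈ range K, (L (k + 1) - L k) / r k := by
  set c : ℕ → ℝ := fun k => firstTime (L k ≤ D ·)
  have hLK {k : ℕ} (hk : k ≤ K) : L k ≤ L K := hL (Set.mem_Iic.2 hk) (Set.mem_Iic.2 le_rfl) hk
  have hDc {k : ℕ} (hk : k ≤ K) : D (c k) = L k := by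
    obtain ⟨t, ht, hLt⟩ := hreach
    exact apply_firstTime_le_eq hD (hD0 ▸ hL (Set.mem_Iic.2 (Nat.zero_le K)) (Set.mem_Iic.2 hk)
      (Nat.zero_le k)) ⟨t, ht, (hLK hk).trans hLt⟩
  have hstep {k : ℕ} (hk : k < K) : c (k + 1) - c k = (L (k + 1) - L k) / r k := by
    have hck : c k ≤ c (k + 1) := firstTime_le firstTime_nonneg <|
      (hDc hk).symm ▸ hL (Set.mem_Iic.2 hk.le) (Set.mem_Iic.2 hk) k.le_succ
    have hbetween : ∀ t ∈ Ico (c k) (c (k + 1)), L k ≤ D t ∧ D t < L (k + 1) := fun t ht =>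
      ⟨(hDc hk.le).symm.le.trans (hDmono firstTime_nonneg (firstTime_nonneg.trans ht.1) ht.1),
        not_le.1 (not_of_lt_firstTime (p := (L (k + 1) ≤ D ·)) (firstTime_nonneg.trans ht.1) ht.2)⟩
    have hlin := sub_eq_sub_of_hasDerivWithinAt_Ici (g := fun t => r k * t) hck hD.continuousOn
      (by fun_prop)
      (fun t ht => hderiv t (firstTime_nonneg.trans ht.1) k hk (hbetween t ht).1 (hbetween t ht).2)
      (fun t _ => by simpa using ((hasDerivAt_id t).const_mul (r k)).hasDerivWithinAt)
    rw [hDc hk.le, hDc hk] at hlin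
    field_simp [hr k hk]
    linarith
  calc c K = c 0 + ∑ k ∈ range K, (c (k + 1) - c k) := by rw [sum_range_sub]; ring
    _ = ∑ k ∈ range K, (L (k + 1) - L k) / r k := by
      rw [show c 0 = 0 from firstTime_eq_zero hD0.ge, zero_add]
      exact sum_congr rfl fun k hk => hstep (mem_range.1 hk)

end crossing

structure IsDrainFlow {ι : Type*} [Fintype ι] (ρ : ℕ → ℝ) (x : ℝ → ι → ℝ) : Prop where
  continuous : ∀ i, Continuous fun t => x t i
  nonneg : ∀ t, 0 ≤ t → ∀ i, 0 ≤ x t i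
  hasDerivWithinAt : ∀ t, 0 ≤ t → ∀ i, 0 < x t i →
    HasDerivWithinAt (fun s => x s i) (-ρ #{j | 0 < x t j}) (Ici t) t
  absorbing : ∀ t, 0 ≤ t → ∀ i, x t i = 0 → ∀ s, t ≤ s → x s i = 0

namespace IsDrainFlow

variable {ι : Type*} [Fintype ι] {ρ : ℕ → ℝ} {x : ℝ → ι → ℝ} {i j : ι} {s t δ : ℝ}

theorem pos_of_le (hx : IsDrainFlow ρ x) (hs : 0 ≤ s) (hst : s ≤ t) (ht : x t i ≠ 0) :
    0 < x s i :=
  (hx.nonneg s hs i).lt_of_ne' fun h => ht (hx.absorbing s hs i h t hst)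

theorem le_sub_mul (hx : IsDrainFlow ρ x) (hρ : ∀ k, 0 < k → k ≤ Fintype.card ι → δ ≤ ρ k)
    (hs : 0 ≤ s) (hst : s ≤ t) (hpos : ∀ u ∈ Ico s t, 0 < x u i) :
    x t i ≤ x s i - δ * (t - s) :=
  image_le_of_deriv_right_le_deriv_boundary (B := fun v => x s i - δ * (v - s))
    (hx.continuous i).continuousOn
    (fun u hu => hx.hasDerivWithinAt u (hs.trans hu.1) i (hpos u hu)) (by simp) (by fun_prop)
    (fun u _ => by simpa using (((hasDerivAt_id u).sub_const s).const_mul δ).const_sub (x s i)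
      |>.hasDerivWithinAt)
    (fun u hu => neg_le_neg <| hρ _ (card_pos.2 ⟨i, by simpa using hpos u hu⟩) (card_le_univ _))
    (right_mem_Icc.2 hst)

theorem antitoneOn (hx : IsDrainFlow ρ x) (hρ : ∀ k, 0 < k → k ≤ Fintype.card ι → 0 ≤ ρ k)
    (i : ι) : AntitoneOn (fun t => x t i) (Ici 0) := by
  intro s hs t _ hst
  by_cases ht : x t i = 0
  · simpa [ht] using hx.nonneg s hs i
  · simpa using hx.le_sub_mul hρ hs hst fun u hu => hx.pos_of_le (hs.trans hu.1) hu.2.le ht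

theorem exists_eq_zero (hx : IsDrainFlow ρ x) (hρ : ∀ k, 0 < k → k ≤ Fintype.card ι → 0 < ρ k)
    (i : ι) : ∃ t, 0 ≤ t ∧ x t i = 0 := by
  have hne : (Finset.Icc 1 (Fintype.card ι)).Nonempty :=
    ⟨1, mem_Icc.2 ⟨le_rfl, Fintype.card_pos_iff.2 ⟨i⟩⟩⟩
  set δ := (Finset.Icc 1 (Fintype.card ι)).inf' hne ρ
  have hδ : 0 < δ := (lt_inf'_iff _).2 fun k hk => hρ k (mem_Icc.1 hk).1 (mem_Icc.1 hk).2
  by_contra! h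
  set T := x 0 i / δ + 1
  have hT : 0 ≤ T := by have := hx.nonneg 0 le_rfl i; positivity
  have hdecr := hx.le_sub_mul (δ := δ) (fun k h1 h2 => inf'_le ρ (mem_Icc.2 ⟨h1, h2⟩)) le_rfl hT
    fun u hu => hx.pos_of_le hu.1 le_rfl (h u hu.1)
  have hxT := hx.nonneg T hT i
  have : δ * T = x 0 i + δ := by simp only [T]; field_simp
  linarith

theorem apply_firstTime_eq_zero (hx : IsDrainFlow ρ x)
    (hρ : ∀ k, 0 < k → k ≤ Fintype.card ι → 0 < ρ k) (i : ι) :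
    x (firstTime (x · i = 0)) i = 0 :=
  firstTime_spec (isClosed_eq (hx.continuous i) continuous_const) (hx.exists_eq_zero hρ i)

theorem pos_of_lt_firstTime (hx : IsDrainFlow ρ x) (ht : 0 ≤ t)
    (h : t < firstTime (x · i = 0)) : 0 < x t i :=
  (hx.nonneg t ht i).lt_of_ne' (not_of_lt_firstTime (p := (x · i = 0)) ht h)

theorem sub_eq_sub_of_le_firstTime (hx : IsDrainFlow ρ x) (ht : 0 ≤ t)
    (hti : t ≤ firstTime (x · i = 0)) (htj : t ≤ firstTime (x · j = 0)) :
    x t i - x t j = x 0 i - x 0 j :=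
  sub_eq_sub_of_hasDerivWithinAt_Ici ht (hx.continuous i).continuousOn
    (hx.continuous j).continuousOn
    (fun u hu => hx.hasDerivWithinAt u hu.1 i (hx.pos_of_lt_firstTime hu.1 (hu.2.trans_le hti)))
    (fun u hu => hx.hasDerivWithinAt u hu.1 j (hx.pos_of_lt_firstTime hu.1 (hu.2.trans_le htj)))

theorem firstTime_le_firstTime (hx : IsDrainFlow ρ x)
    (hρ : ∀ k, 0 < k → k ≤ Fintype.card ι → 0 < ρ k) (h : x 0 j ≤ x 0 i) :
    firstTime (x · j = 0) ≤ firstTime (x · i = 0) := by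
  by_contra! hlt
  have hgap := hx.sub_eq_sub_of_le_firstTime firstTime_nonneg le_rfl hlt.le
  have hpos := hx.pos_of_lt_firstTime firstTime_nonneg hlt
  rw [hx.apply_firstTime_eq_zero hρ i] at hgap
  linarith

theorem apply_eq_max_sub (hx : IsDrainFlow ρ x)
    (hρ : ∀ k, 0 < k → k ≤ Fintype.card ι → 0 < ρ k) (h : x 0 j ≤ x 0 i) (ht : 0 ≤ t) :
    x t j = max (x t i - (x 0 i - x 0 j)) 0 := by
  set τ := firstTime (x · j = 0)
  have hτ : τ ≤ firstTime (x · i = 0) := hx.firstTime_le_firstTime hρ h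
  have hτj : x τ j = 0 := hx.apply_firstTime_eq_zero hρ j
  rcases le_or_gt t τ with htτ | hτt
  · rw [← hx.sub_eq_sub_of_le_firstTime ht (htτ.trans hτ) htτ, sub_sub_cancel,
      max_eq_left (hx.nonneg t ht j)]
  · have hgap := hx.sub_eq_sub_of_le_firstTime firstTime_nonneg hτ le_rfl
    have hdecr := hx.antitoneOn (fun k h1 h2 => (hρ k h1 h2).le) i firstTime_nonneg ht hτt.le
    rw [hτj, sub_zero] at hgap
    rw [hx.absorbing τ firstTime_nonneg j hτj t hτt.le, max_eq_right]
    simp only at hdecr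
    linarith

theorem pos_iff (hx : IsDrainFlow ρ x) (hρ : ∀ k, 0 < k → k ≤ Fintype.card ι → 0 < ρ k)
    (hi : ∀ j, x 0 j ≤ x 0 i) (ht : 0 ≤ t) : 0 < x t j ↔ x 0 i - x t i < x 0 j := by
  rw [hx.apply_eq_max_sub hρ (hi j) ht, lt_max_iff, lt_self_iff_false, or_false, sub_pos,
    sub_lt_comm]

theorem forall_eq_zero_iff (hx : IsDrainFlow ρ x)
    (hρ : ∀ k, 0 < k → k ≤ Fintype.card ι → 0 < ρ k) (hi : ∀ j, x 0 j ≤ x 0 i) (ht : 0 ≤ t) :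
    (∀ j, x t j = 0) ↔ x t i = 0 := by
  refine ⟨fun h => h i, fun h j => (hx.nonneg t ht j).antisymm' ?_⟩
  exact not_lt.1 fun hpos => ((hx.pos_iff hρ hi ht).1 hpos).not_ge (by linarith [hi j])

theorem hasDerivWithinAt_sub (hx : IsDrainFlow ρ x)
    (hρ : ∀ k, 0 < k → k ≤ Fintype.card ι → 0 < ρ k) (hi : ∀ j, x 0 j ≤ x 0 i) (ht : 0 ≤ t)
    (hpos : 0 < x t i) :
    HasDerivWithinAt (fun s => x 0 i - x s i) (ρ #{j | x 0 i - x t i < x 0 j}) (Ici t) t := by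
  have h := (hx.hasDerivWithinAt t ht i hpos).const_sub (x 0 i)
  rwa [neg_neg, filter_congr fun j _ => hx.pos_iff hρ hi ht] at h

end IsDrainFlow

section sorted

variable {n : ℕ} (v : Fin n → ℝ)

theorem sortedAsc_of_lt {k : ℕ} (hk : k < n) : sortedAsc v k = v (Tuple.sort v ⟨k, hk⟩) :=
  dif_pos hk

theorem sortedAsc_le_sortedAsc {k l : ℕ} (hkl : k ≤ l) (hl : l < n) :
    sortedAsc v k ≤ sortedAsc v l := by
  rw [sortedAsc_of_lt v (hkl.trans_lt hl), sortedAsc_of_lt v hl]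
  exact Tuple.monotone_sort v (Fin.mk_le_mk.2 hkl)

theorem apply_le_sortedAsc_pred (j : Fin n) : v j ≤ sortedAsc v (n - 1) := by
  have hn : n - 1 < n := by have := j.isLt; omega
  rw [sortedAsc_of_lt v hn]
  calc v j = (v ∘ Tuple.sort v) ((Tuple.sort v).symm j) := by simp
    _ ≤ (v ∘ Tuple.sort v) ⟨n - 1, hn⟩ :=
      Tuple.monotone_sort v (Fin.le_def.2 (Nat.le_sub_one_of_lt ((Tuple.sort v).symm j).isLt))

noncomputable def drainLevel : ℕ → ℝ
  | 0 => 0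
  | k + 1 => sortedAsc v k

theorem drainLevel_monotoneOn (hv : ∀ j, 0 ≤ v j) : MonotoneOn (drainLevel v) (Set.Iic n) := by
  rintro (_ | k) hk (_ | l) hl hkl
  · exact le_rfl
  · exact (hv _).trans_eq (sortedAsc_of_lt v (Set.mem_Iic.1 hl)).symm
  · omega
  · exact sortedAsc_le_sortedAsc v (by omega) (Set.mem_Iic.1 hl)

theorem card_lt_eq_sub {r : ℝ} {k : ℕ} (hk : k < n) (hlo : drainLevel v k ≤ r)
    (hhi : r < drainLevel v (k + 1)) : #{j | r < v j} = n - k := by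
  have hperm : #{l : Fin n | k ≤ (l : ℕ)} = #{j | r < v j} := by
    refine card_equiv (Tuple.sort v) fun l => ?_
    simp only [mem_filter_univ]
    constructor
    · intro hkl
      exact hhi.trans_le ((sortedAsc_of_lt v hk).trans_le
        (Tuple.monotone_sort v (Fin.le_def.2 hkl : (⟨k, hk⟩ : Fin n) ≤ l)))
    · intro hlt
      by_contra! hlk
      obtain ⟨k, rfl⟩ := Nat.exists_eq_add_one_of_ne_zero (by omega : k ≠ 0)
      have := Tuple.monotone_sort v (Fin.le_def.2 (Nat.le_of_lt_succ hlk) : l ≤ ⟨k, by omega⟩)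
      simp only [Function.comp_apply] at this
      rw [drainLevel, sortedAsc_of_lt v (by omega)] at hlo
      linarith
  rw [← hperm]
  have hlt := Fin.card_filter_val_lt (n := n) (m := k)
  have htot := card_filter_add_card_filter_not (s := (univ : Finset (Fin n))) (fun l => (l : ℕ) < k)
  simp only [not_lt, card_univ, Fintype.card_fin] at htot
  omega

theorem drainLevel_of_pos (hn : 0 < n) : drainLevel v n = sortedAsc v (n - 1) := by
  obtain ⟨n, rfl⟩ := Nat.exists_eq_add_one_of_ne_zero hn.ne'
  rfl

theorem drainTime_eq_sum (N m : ℕ) (ε : ℕ → ℝ) (hn : 0 < n) :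
    drainTime N m ε v = ∑ k ∈ range n, (drainLevel v (k + 1) - drainLevel v k) / ε (N - k) := by
  obtain ⟨n, rfl⟩ := Nat.exists_eq_add_one_of_ne_zero hn.ne'
  rw [sum_range_succ', drainTime, add_comm]
  simp [drainLevel, Nat.sub_sub, add_comm]

end sorted

theorem IsDrainFlow.firstTime_forall_eq_zero {n : ℕ} {ρ : ℕ → ℝ} {x : ℝ → Fin n → ℝ}
    (hx : IsDrainFlow ρ x) (hρ : ∀ k, 0 < k → k ≤ n → 0 < ρ k) (hn : 0 < n) :
    firstTime (fun t => ∀ j, x t j = 0) =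
      ∑ k ∈ range n, (drainLevel (x 0) (k + 1) - drainLevel (x 0) k) / ρ (n - k) := by
  replace hρ : ∀ k, 0 < k → k ≤ Fintype.card (Fin n) → 0 < ρ k := by simpa using hρ
  have : Nonempty (Fin n) := ⟨⟨0, hn⟩⟩
  obtain ⟨i, hi⟩ := Finite.exists_max (x 0)
  have hL := drainLevel_monotoneOn (x 0) (hx.nonneg 0 le_rfl)
  have htop : drainLevel (x 0) n = x 0 i := by
    rw [drainLevel_of_pos _ hn]
    exact le_antisymm ((sortedAsc_of_lt _ (by omega)).trans_le (hi _)) (apply_le_sortedAsc_pred _ i)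
  have hzero : ∀ t, 0 ≤ t → ((∀ j, x t j = 0) ↔ drainLevel (x 0) n ≤ x 0 i - x t i) := by
    intro t ht
    rw [hx.forall_eq_zero_iff hρ hi ht, htop]
    constructor <;> intro h <;> linarith [hx.nonneg t ht i]
  rw [firstTime_congr hzero]
  refine firstTime_le_eq_sum (continuous_const.sub (hx.continuous i)) ?_ hL
    (by simp [drainLevel]) ?_ ?_ ?_
  · exact fun s hs t ht hst =>
      sub_le_sub_left (hx.antitoneOn (fun k h1 h2 => (hρ k h1 h2).le) i hs ht hst) _
  · obtain ⟨t, ht, hxt⟩ := hx.exists_eq_zero hρ i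
    exact ⟨t, ht, by rw [htop, hxt, sub_zero]⟩
  · exact fun k hk => (hρ _ (by omega) (by simp)).ne'
  · intro t ht k hk hlo hhi
    have hpos : 0 < x t i := (hx.pos_iff hρ hi ht).2 <|
      htop ▸ hhi.trans_le (hL (Set.mem_Iic.2 hk) (Set.mem_Iic.2 le_rfl) hk)
    simpa [card_lt_eq_sub (x 0) hk hlo hhi] using hx.hasDerivWithinAt_sub hρ hi ht hpos

/-- for the piecewise-linear dynamics in which every strictly positive
component decreases at rate `ε(|M(t)|)` (where `M(t)` counts the `m` infinite components
together with the positive finite ones) and components absorbed at `0` stay at `0`,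
all finite components hit `0` exactly at time `T(m, x(0))`. -/
theorem finite_components_hit_zero_at_drainTime
    (N m : ℕ) (hN : 0 < N) (hm : m ≤ N - 1)
    (ε : ℕ → ℝ) (hε : ∀ k, 1 ≤ k → k ≤ N → 0 < ε k)
    (x : ℝ → Fin (N - m) → ℝ)
    (hcont : ∀ i, Continuous fun t => x t i)
    (hnonneg : ∀ t, 0 ≤ t → ∀ i, 0 ≤ x t i)
    (hderiv : ∀ t, 0 ≤ t → ∀ i, 0 < x t i →
      HasDerivWithinAt (fun s => x s i)
        (-(ε (m + (Finset.univ.filter fun j => 0 < x t j).card))) (Set.Ici t) t)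
    (hzero : ∀ t, 0 ≤ t → ∀ i, x t i = 0 → ∀ s, t ≤ s → x s i = 0) :
    sInf {t : ℝ | 0 ≤ t ∧ ∀ i, x t i = 0} = drainTime N m ε (x 0) := by
  have hx : IsDrainFlow (fun k => ε (m + k)) x := ⟨hcont, hnonneg, hderiv, hzero⟩
  have hn : 0 < N - m := by omega
  rw [drainTime_eq_sum _ _ _ _ hn]
  refine (hx.firstTime_forall_eq_zero (fun k h1 h2 => hε _ (by omega) (by omega)) hn).trans
    (sum_congr rfl fun k hk => ?_)
  rw [show m + (N - m - k) = N - k by have := mem_range.1 hk; omega]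
end

section
/- Let (Φ_i)_{i≥0} be a discrete-time Markov chain on a state space with norm ‖·‖, adapted to a filtration (F_i), satisfying the geometric drift condition E[‖Φ_{i+1}‖ | F_i] ≤ (1-γ)‖Φ_i‖ whenever ‖Φ_i‖ > C, for fixed γ ∈ (0,1) and C > 0. Let θ̂_C = inf{ i ≥ 0 : ‖Φ_i‖ ≤ C }, and let T_i = τ‖Φ_{i-1}‖ for a fixed τ > 0 be interstep durations. Then E[ Σ_{i=1}^{θ̂_C} T_i | Φ_0 ] ≤ (τ/γ)‖Φ_0‖. -/
open MeasureTheory ProbabilityTheory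

/-- Foster–Lyapunov / Dynkin estimate. If the norm process `V i = ‖Φ_i‖`
of a chain adapted to a filtration `F` satisfies the geometric drift condition
`E[V_{i+1} | F_i] ≤ (1-γ) V_i` on `{V_i > C}`, and `θ̂_C` is the first time `V` enters
`[0, C]`, then the expected total weighted duration `∑_{i=1}^{θ̂_C} τ V_{i-1}` starting
from `V_0 = v₀` is at most `(τ/γ) v₀`. -/
theorem expected_weighted_hitting_time_bound
    {Ω : Type*} {m0 : MeasurableSpace Ω} (P : Measure Ω) [IsProbabilityMeasure P]
    (F : Filtration ℕ m0) (V : ℕ → Ω → ℝ)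
    (γ C τ v₀ : ℝ) (hγ0 : 0 < γ) (hγ1 : γ < 1) (hC : 0 < C) (hτ : 0 < τ)
    (hadapted : Adapted F V)
    (hint : ∀ i, Integrable (V i) P)
    (hnonneg : ∀ i ω, 0 ≤ V i ω)
    (hdrift : ∀ i, ∀ᵐ ω ∂P, C < V i ω → (P[V (i + 1)|F i]) ω ≤ (1 - γ) * V i ω)
    (hstart : ∀ ω, V 0 ω = v₀)
    (θ : Ω → ℕ) (hθ : ∀ ω, θ ω = sInf {i : ℕ | V i ω ≤ C}) :
    ∫⁻ ω, (∑' i : ℕ, if i < θ ω then ENNReal.ofReal (τ * V i ω) else 0) ∂P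
      ≤ ENNReal.ofReal (τ / γ * v₀) := by
  classical
  have hΩ : Nonempty Ω := by
    by_contra h
    have : P Set.univ = 1 := measure_univ
    rw [Set.univ_eq_empty_iff.2 (not_nonempty_iff.1 h), measure_empty] at this
    exact zero_ne_one this
  have hv₀ : 0 ≤ v₀ := by
    obtain ⟨ω⟩ := hΩ
    rw [← hstart ω]; exact hnonneg 0 ω
  have hVmeas : ∀ i, Measurable (V i) := fun i =>
    ((hadapted i).mono (F.le i) le_rfl)
  set B : ℕ → Set Ω := fun i => {ω | ∀ j ≤ i, C < V j ω} with hB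
  have hBmeasF : ∀ i, MeasurableSet[F i] (B i) := by
    intro i
    have : B i = ⋂ j ∈ Set.Iic i, {ω | C < V j ω} := by
      ext ω; simp [hB, Set.mem_iInter]
    rw [this]
    refine MeasurableSet.biInter (Set.to_countable _) fun j hj => ?_
    exact measurableSet_lt measurable_const ((hadapted j).mono (F.mono hj) le_rfl)
  have hBmeas : ∀ i, MeasurableSet (B i) := fun i => (F.le i) _ (hBmeasF i)
  have hBsub : ∀ i, B (i + 1) ⊆ B i := fun i ω hω j hj => hω j (hj.trans (Nat.le_succ i))
  have hBdrift : ∀ i, ∀ ω ∈ B i, C < V i ω := fun i ω hω => hω i le_rfl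
  -- induction bound on set integrals
  have key : ∀ i, ∫ ω in B i, V i ω ∂P ≤ (1 - γ) ^ i * v₀ := by
    intro i
    induction i with
    | zero =>
      simp only [pow_zero, one_mul]
      have h1 : ∫ ω in B 0, V 0 ω ∂P = ∫ ω in B 0, v₀ ∂P := by
        apply setIntegral_congr_fun (hBmeas 0)
        intro ω _; exact hstart ω
      rw [h1, setIntegral_const, smul_eq_mul]
      calc (P (B 0)).toReal * v₀ ≤ 1 * v₀ := by
            apply mul_le_mul_of_nonneg_right _ hv₀
            exact ENNReal.toReal_le_of_le_ofReal zero_le_one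
              (by simpa using prob_le_one (μ := P) (s := B 0))
        _ = v₀ := one_mul v₀
    | succ i ih =>
      have hγ' : (0:ℝ) ≤ 1 - γ := by linarith
      have step1 : ∫ ω in B (i + 1), V (i + 1) ω ∂P ≤ ∫ ω in B i, V (i + 1) ω ∂P := by
        apply setIntegral_mono_set ((hint (i + 1)).integrableOn)
        · exact Filter.Eventually.of_forall fun ω => hnonneg (i + 1) ω
        · exact HasSubset.Subset.eventuallyLE (hBsub i)
      have step2 : ∫ ω in B i, V (i + 1) ω ∂P
          = ∫ ω in B i, (P[V (i + 1)|F i]) ω ∂P :=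
        (setIntegral_condExp (F.le i) (hint (i + 1)) (hBmeasF i)).symm
      have step3 : ∫ ω in B i, (P[V (i + 1)|F i]) ω ∂P
          ≤ ∫ ω in B i, (1 - γ) * V i ω ∂P := by
        apply setIntegral_mono_ae_restrict integrable_condExp.integrableOn
          (((hint i).const_mul (1 - γ)).integrableOn)
        have h1 : ∀ᵐ ω ∂(P.restrict (B i)), C < V i ω → (P[V (i + 1)|F i]) ω ≤ (1 - γ) * V i ω :=
          ae_restrict_of_ae (hdrift i)
        have h2 : ∀ᵐ ω ∂(P.restrict (B i)), ω ∈ B i :=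
          ae_restrict_mem (hBmeas i)
        filter_upwards [h1, h2] with ω h1 h2
        exact h1 (hBdrift i ω h2)
      have step4 : ∫ ω in B i, (1 - γ) * V i ω ∂P = (1 - γ) * ∫ ω in B i, V i ω ∂P := by
        exact integral_const_mul _ _
      calc ∫ ω in B i.succ, V i.succ ω ∂P ≤ (1 - γ) * ∫ ω in B i, V i ω ∂P := by
            rw [step2] at step1; exact step1.trans (step3.trans_eq step4)
        _ ≤ (1 - γ) * ((1 - γ) ^ i * v₀) := mul_le_mul_of_nonneg_left ih hγ'
        _ = (1 - γ) ^ (i + 1) * v₀ := by ring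
  -- pointwise bound on summands
  have hpoint : ∀ i ω, (if i < θ ω then ENNReal.ofReal (τ * V i ω) else 0)
      ≤ (B i).indicator (fun ω => ENNReal.ofReal (τ * V i ω)) ω := by
    intro i ω
    by_cases h : i < θ ω
    · have hmem : ω ∈ B i := by
        intro j hj
        by_contra hc
        push_neg at hc
        have : θ ω ≤ j := by
          rw [hθ]; exact Nat.sInf_le hc
        omega
      simp [h, Set.indicator_of_mem hmem]
    · simp [h]
  have hγ' : (0:ℝ) ≤ 1 - γ := by linarith
  calc ∫⁻ ω, (∑' i : ℕ, if i < θ ω then ENNReal.ofReal (τ * V i ω) else 0) ∂P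
      ≤ ∫⁻ ω, (∑' i : ℕ, (B i).indicator (fun ω => ENNReal.ofReal (τ * V i ω)) ω) ∂P := by
        apply lintegral_mono
        intro ω
        exact ENNReal.tsum_le_tsum fun i => hpoint i ω
    _ = ∑' i : ℕ, ∫⁻ ω, (B i).indicator (fun ω => ENNReal.ofReal (τ * V i ω)) ω ∂P := by
        apply lintegral_tsum
        intro i
        exact ((ENNReal.measurable_ofReal.comp ((hVmeas i).const_mul τ)).indicator
          (hBmeas i)).aemeasurable
    _ = ∑' i : ℕ, ∫⁻ ω in B i, ENNReal.ofReal (τ * V i ω) ∂P := by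
        congr 1; ext i
        rw [lintegral_indicator (hBmeas i)]
    _ = ∑' i : ℕ, ENNReal.ofReal (∫ ω in B i, τ * V i ω ∂P) := by
        congr 1; ext i
        rw [← ofReal_integral_eq_lintegral_ofReal (((hint i).const_mul τ).integrableOn)
          (Filter.Eventually.of_forall fun ω => mul_nonneg hτ.le (hnonneg i ω))]
    _ ≤ ∑' i : ℕ, ENNReal.ofReal (τ * v₀) * ENNReal.ofReal (1 - γ) ^ i := by
        apply ENNReal.tsum_le_tsum
        intro i
        rw [integral_const_mul]
        calc ENNReal.ofReal (τ * ∫ ω in B i, V i ω ∂P)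
            ≤ ENNReal.ofReal (τ * ((1 - γ) ^ i * v₀)) :=
              ENNReal.ofReal_le_ofReal (mul_le_mul_of_nonneg_left (key i) hτ.le)
          _ = ENNReal.ofReal (τ * v₀) * ENNReal.ofReal (1 - γ) ^ i := by
              rw [← ENNReal.ofReal_pow hγ', ← ENNReal.ofReal_mul (mul_nonneg hτ.le hv₀)]
              ring_nf
    _ = ENNReal.ofReal (τ * v₀) * (1 - ENNReal.ofReal (1 - γ))⁻¹ := by
        rw [ENNReal.tsum_mul_left, ENNReal.tsum_geometric]
    _ = ENNReal.ofReal (τ / γ * v₀) := by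
        have h1 : (1 : ENNReal) - ENNReal.ofReal (1 - γ) = ENNReal.ofReal γ := by
          rw [← ENNReal.ofReal_one, ← ENNReal.ofReal_sub _ hγ']
          norm_num
        rw [h1, ← ENNReal.ofReal_inv_of_pos hγ0,
          ← ENNReal.ofReal_mul (mul_nonneg hτ.le hv₀)]
        congr 1
        field_simp
end

section
/- The fixed point of the fluid equations is unique and equals (q₁*, q₂*, δ₀*, δ₁*) = (κ+λ, κ, 1-λ-κ, 0) when κ < 1-λ: that is, the system λ·p₀ = y₁ (arrival-departure balance at busy servers), μ·u = ξ' (idle-on/off balance), ξ' = ν·δ₁ (setup balance), q_i = κ for i ≥ 2, with p₀ as defined (p₀ = 1 if u > 0, else min{(δ₁ν + y₁)/λ, 1}), u = 1 - q₁ - δ₀ - δ₁ ≥ 0, and all variables in [0,1] with q₁ ≥ q₂ ≥ κ, has the unique solution δ₁ = 0, u = 0, q₁ = κ+λ, q₂ = κ, δ₀ = 1-λ-κ. -/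
/-!
If some servers were idle (`u > 0`), every arrival would join a busy server (`p₀ = 1`), so no
server would be switched on and idle servers could not drain: `μ u = 0`, impossible. Hence
`u = 0`, and then setup balance gives `ν δ₁ = μ u = 0`. Next `p₀ = 1`: if `δ₀ > 0` this is
setup balance again, and if `δ₀ = 0` all servers are busy, `q₁ = 1`, and `κ < 1 - λ` makes
`(q₁ - κ) / λ > 1`. Arrival balance `λ = q₁ - κ` and `u = 0` then pin down `q₁` and `δ₀`.
-/

section FluidEquilibrium

variable {K : Type*} [Field K] [LinearOrder K] [IsStrictOrderedRing K]

theorem idle_eq_zero_of_balance {lam μ u p₀ c : K} (hμ : 0 < μ) (hu : 0 ≤ u)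
    (hp₀ : 0 < u → p₀ = 1) (hbal : μ * u = lam * (1 - p₀) * c) : u = 0 := by
  refine hu.eq_or_lt.elim Eq.symm fun hpos => ?_
  have hμu : μ * u = 0 := by rw [hbal, hp₀ hpos]; ring
  exact absurd hμu (mul_pos hμ hpos).ne'

theorem routing_eq_one_of_balance {lam κ q₁ δ₀ p₀ : K} (hlam : 0 < lam) (hκ : κ < 1 - lam)
    (hp₀ : p₀ = min ((q₁ - κ) / lam) 1) (hq₁ : q₁ = 1 - δ₀)
    (hbal : lam * (1 - p₀) * (if 0 < δ₀ then 1 else 0) = 0) : p₀ = 1 := by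
  by_cases hδ₀ : 0 < δ₀
  · rw [if_pos hδ₀, mul_one, mul_eq_zero] at hbal
    rcases hbal with hlam0 | hp
    · exact absurd hlam0 hlam.ne'
    · linarith
  · have hratio : 1 ≤ (q₁ - κ) / lam := by
      rw [le_div_iff₀ hlam]
      linarith
    rw [hp₀, min_eq_right hratio]

end FluidEquilibrium

theorem fluid_fixed_point_unique_general
    (lam μ ν κ q₁ q₂ δ₀ δ₁ u p₀ : ℝ)
    (hlam0 : 0 < lam) (hμ : 0 < μ) (hν : 0 < ν)
    (hκ : κ < 1 - lam)
    (hudef : u = 1 - q₁ - δ₀ - δ₁) (hu : 0 ≤ u)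
    (hq₂ : q₂ = κ)
    (hp₀ : p₀ = if 0 < u then 1 else min ((δ₁ * ν + (q₁ - q₂)) / lam) 1)
    (heq1 : lam * p₀ = q₁ - q₂)
    (heq2 : μ * u = lam * (1 - p₀) * (if 0 < δ₀ then 1 else 0))
    (heq3 : lam * (1 - p₀) * (if 0 < δ₀ then 1 else 0) = ν * δ₁) :
    δ₁ = 0 ∧ u = 0 ∧ q₁ = κ + lam ∧ q₂ = κ ∧ δ₀ = 1 - lam - κ := by
  have hu0 : u = 0 := idle_eq_zero_of_balance hμ hu (fun hpos => by rw [hp₀, if_pos hpos]) heq2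
  have hsetup : lam * (1 - p₀) * (if 0 < δ₀ then 1 else 0) = 0 := by rw [← heq2, hu0, mul_zero]
  have hδ₁ : δ₁ = 0 := by
    rw [hsetup, eq_comm, mul_eq_zero] at heq3
    exact heq3.resolve_left hν.ne'
  subst hu0 hδ₁ hq₂
  rw [if_neg (lt_irrefl 0), zero_mul, zero_add] at hp₀
  have hp₁ : p₀ = 1 := routing_eq_one_of_balance hlam0 hκ hp₀ (by linarith) hsetup
  rw [hp₁, mul_one] at heq1
  exact ⟨rfl, rfl, by linarith, rfl, by linarith⟩

/-- uniqueness of the fluid fixed point for `κ < 1-λ`. The equilibrium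
conditions `λ p₀ = q₁ - q₂`, `μ u = λ(1-p₀)1{δ₀>0}`, `λ(1-p₀)1{δ₀>0} = ν δ₁`,
`q₂ = κ`, with `p₀ = 1` if `u > 0` and `p₀ = min((δ₁ν + q₁ - q₂)/λ, 1)` if `u = 0`,
`u = 1 - q₁ - δ₀ - δ₁ ≥ 0`, force the unique solution
`δ₁ = 0`, `u = 0`, `q₁ = κ+λ`, `q₂ = κ`, `δ₀ = 1-λ-κ`. -/
theorem fluid_fixed_point_unique
    (lam μ ν κ q₁ q₂ δ₀ δ₁ u p₀ : ℝ)
    (hlam0 : 0 < lam) (hlam1 : lam < 1) (hμ : 0 < μ) (hν : 0 < ν)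
    (hκ0 : 0 ≤ κ) (hκ : κ < 1 - lam)
    (hq₂κ : κ ≤ q₂) (hq : q₂ ≤ q₁) (hq₁ : q₁ ≤ 1)
    (hδ₀0 : 0 ≤ δ₀) (hδ₀1 : δ₀ ≤ 1) (hδ₁0 : 0 ≤ δ₁) (hδ₁1 : δ₁ ≤ 1)
    (hudef : u = 1 - q₁ - δ₀ - δ₁) (hu : 0 ≤ u)
    (hq₂ : q₂ = κ)
    (hp₀ : p₀ = if 0 < u then 1 else min ((δ₁ * ν + (q₁ - q₂)) / lam) 1)
    (heq1 : lam * p₀ = q₁ - q₂)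
    (heq2 : μ * u = lam * (1 - p₀) * (if 0 < δ₀ then 1 else 0))
    (heq3 : lam * (1 - p₀) * (if 0 < δ₀ then 1 else 0) = ν * δ₁) :
    δ₁ = 0 ∧ u = 0 ∧ q₁ = κ + lam ∧ q₂ = κ ∧ δ₀ = 1 - lam - κ :=
  fluid_fixed_point_unique_general lam μ ν κ q₁ q₂ δ₀ δ₁ u p₀ hlam0 hμ hν hκ hudef hu hq₂ hp₀ heq1
    heq2 heq3
end
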